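/- arXiv:2308.16352 — 7 statements merged into one kernel-verified Lean document; each statement's English description precedes it below -/
import Mathlib

section
/- More precisely, as p → ∞, (M/L) ∑_{m=1}^M log₂(1 + L λ_m s_m★(p)) − (M²/L)[log₂ p + (1/M) ∑_{m=1}^M log₂(L λ_m / M)] → 0. -/
open Filter Topology

/-!
Once the power budget `p` exceeds `M ∑ₖ 1/(Lλₖ)`, the water level `1/ν` lies above every
noise level `1/(Lλₘ)`, so every channel is active and the level is `(p + C)/M` with
`C = ∑ₖ 1/(Lλₖ)`. Then `1 + Lλₘ sₘ = (Lλₘ/M)(p + C)` exactly, and the quantity in question equals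
`(M²/L)(log₂ (p + C) − log₂ p)`, which tends to `0`.
-/

section WaterFilling

variable {ι : Type*} [Fintype ι] {a : ι → ℝ} {w : ℝ}

theorem forall_le_of_card_mul_sum_lt_sum_max_zero_sub (ha : ∀ i, 0 ≤ a i)
    (h : Fintype.card ι * ∑ i, a i < ∑ i, max 0 (w - a i)) : ∀ i, a i ≤ w := by
  intro j
  by_contra! hj
  have hw : w < ∑ i, a i :=
    hj.trans_le (Finset.single_le_sum (fun i _ => ha i) (Finset.mem_univ j))
  have hle : ∑ i, max 0 (w - a i) ≤ ∑ _i : ι, ∑ i, a i :=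
    Finset.sum_le_sum fun i _ => max_le (Finset.sum_nonneg fun i _ => ha i) (by linarith [ha i])
  rw [Finset.sum_const, Finset.card_univ, nsmul_eq_mul] at hle
  linarith

theorem sum_max_zero_sub_of_forall_le (h : ∀ i, a i ≤ w) :
    ∑ i, max 0 (w - a i) = Fintype.card ι * w - ∑ i, a i := by
  simp_rw [max_eq_right (sub_nonneg.2 (h _))]
  rw [Finset.sum_sub_distrib, Finset.sum_const, Finset.card_univ, nsmul_eq_mul]

end WaterFilling

theorem waterFilling_rate_sub_eq_of_lt {M : ℕ} {L : ℝ} (hL : 0 < L) {lam : Fin M → ℝ}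
    (hlam : ∀ m, 0 < lam m) {s : Fin M → ℝ} {p ν : ℝ}
    (hp : (M : ℝ) * ∑ k, 1 / (L * lam k) < p)
    (hform : ∀ m, s m = max 0 (1 / ν - 1 / (L * lam m))) (hsum : ∑ m, s m = p) :
    (M : ℝ) / L * ∑ m, Real.logb 2 (1 + L * lam m * s m)
        - (M : ℝ) ^ 2 / L * (Real.logb 2 p + (1 / (M : ℝ)) * ∑ m, Real.logb 2 (L * lam m / M))
      = (M : ℝ) ^ 2 / L * (Real.logb 2 (p + ∑ k, 1 / (L * lam k)) - Real.logb 2 p) := by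
  set C := ∑ k, 1 / (L * lam k)
  have hLlam : ∀ m, 0 < L * lam m := fun m => mul_pos hL (hlam m)
  have hC : 0 ≤ C := Finset.sum_nonneg fun k _ => (one_div_pos.2 (hLlam k)).le
  have hpC : 0 < p + C := by nlinarith [(M.cast_nonneg : (0 : ℝ) ≤ M)]
  simp only [hform] at hsum
  have hactive := forall_le_of_card_mul_sum_lt_sum_max_zero_sub
    (fun m => (one_div_pos.2 (hLlam m)).le) (by rwa [Fintype.card_fin, hsum])
  rw [sum_max_zero_sub_of_forall_le hactive, Fintype.card_fin] at hsum
  have hlevel : (M : ℝ) * (1 / ν) = p + C := by linarith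
  have hM : (M : ℝ) ≠ 0 := by rintro hM; rw [hM, zero_mul] at hlevel; linarith
  have hlog : ∀ m, Real.logb 2 (1 + L * lam m * s m)
      = Real.logb 2 (L * lam m / M) + Real.logb 2 (p + C) := by
    intro m
    have hterm : 1 + L * lam m * s m = L * lam m / M * (p + C) := by
      rw [hform m, max_eq_right (sub_nonneg.2 (hactive m)), mul_sub,
        mul_one_div_cancel (hLlam m).ne', ← hlevel]
      field_simp
      ring
    rw [hterm, Real.logb_mul (div_pos (hLlam m) (by positivity)).ne' hpC.ne']
  simp only [hlog, Finset.sum_add_distrib, Finset.sum_const, Finset.card_univ,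
    Fintype.card_fin, nsmul_eq_mul]
  field_simp
  ring

theorem stmt_4_general (M : ℕ) (L : ℝ) (hL : 0 < L)
    (lam : Fin M → ℝ) (hlam : ∀ m, 0 < lam m)
    (s : ℝ → Fin M → ℝ)
    (hs : ∀ p > (0 : ℝ), ∃ ν > (0 : ℝ),
      (∀ m, s p m = max 0 (1 / ν - 1 / (L * lam m))) ∧ ∑ m, s p m = p) :
    Tendsto
      (fun p : ℝ =>
        (M : ℝ) / L * ∑ m, Real.logb 2 (1 + L * lam m * s p m)
          - (M : ℝ) ^ 2 / L *
            (Real.logb 2 p + (1 / (M : ℝ)) * ∑ m, Real.logb 2 (L * lam m / M)))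
      atTop (𝓝 0) := by
  set C := ∑ k, 1 / (L * lam k)
  have hlim := (Real.tendsto_logb_comp_add_sub_logb (b := 2) C).const_mul ((M : ℝ) ^ 2 / L)
  rw [mul_zero] at hlim
  refine hlim.congr' ?_
  filter_upwards [eventually_gt_atTop 0, eventually_gt_atTop ((M : ℝ) * C)] with p hp hpC
  obtain ⟨ν, -, hform, hsum⟩ := hs p hp
  exact (waterFilling_rate_sub_eq_of_lt hL hlam hpC hform hsum).symm

/-- Refined high-SNR expansion of the water-filling sensing rate:
`(M/L) ∑ log₂(1 + L λ_m s_m★(p)) − (M²/L)[log₂ p + (1/M) ∑ log₂(L λ_m / M)] → 0`. -/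
theorem stmt_4 (M : ℕ) (hM : 0 < M) (L : ℝ) (hL : 0 < L)
    (lam : Fin M → ℝ) (hlam : ∀ m, 0 < lam m)
    (s : ℝ → Fin M → ℝ)
    (hs : ∀ p > (0 : ℝ), ∃ ν > (0 : ℝ),
      (∀ m, s p m = max 0 (1 / ν - 1 / (L * lam m))) ∧ ∑ m, s p m = p) :
    Tendsto
      (fun p : ℝ =>
        (M : ℝ) / L * ∑ m, Real.logb 2 (1 + L * lam m * s p m)
          - (M : ℝ) ^ 2 / L *
            (Real.logb 2 p + (1 / (M : ℝ)) * ∑ m, Real.logb 2 (L * lam m / M)))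
      atTop (𝓝 0) :=
  stmt_4_general M L hL lam hlam s hs
end

section
/- If X is standard exponential and a > b > 0, then E[log₂(1 + aX/(bX+1))] = E[log₂(1+(a+b)X)] − E[log₂(1+bX)] = −(1/ln 2)(e^{1/(a+b)} Ei(−1/(a+b)) − e^{1/b} Ei(−1/b)). -/
open MeasureTheory Set Filter

/-- The exponential integral `Ei(x) = ∫_{−∞}^x e^t / t dt`. -/
noncomputable def Ei (x : ℝ) : ℝ := ∫ t in Set.Iic x, Real.exp t / t

lemma Ei_integrableOn {y : ℝ} (hy : y < 0) :
    IntegrableOn (fun t => Real.exp t / t) (Set.Iic y) := by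
  have hmeas : AEStronglyMeasurable (fun t => Real.exp t / t)
      (volume.restrict (Set.Iic y)) :=
    ((Real.measurable_exp.div measurable_id).aestronglyMeasurable).restrict
  refine (((integrableOn_exp_Iic y).mul_const (-y)⁻¹)).mono hmeas ?_
  filter_upwards [ae_restrict_mem measurableSet_Iic] with t ht
  have ht0 : t < 0 := lt_of_le_of_lt ht hy
  have h1 : ‖Real.exp t / t‖ = Real.exp t * (-t)⁻¹ := by
    rw [norm_div, Real.norm_eq_abs, Real.norm_eq_abs, abs_of_pos (Real.exp_pos t),
      abs_of_neg ht0, div_eq_mul_inv]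
  have hy' : (0:ℝ) < -y := by linarith
  have h2 : ‖Real.exp t * (-y)⁻¹‖ = Real.exp t * (-y)⁻¹ := by
    rw [Real.norm_eq_abs, abs_of_nonneg]
    positivity
  rw [h1, h2]
  have ht' : t ≤ y := ht
  have : (-t)⁻¹ ≤ (-y)⁻¹ := inv_anti₀ hy' (by linarith)
  exact mul_le_mul_of_nonneg_left this (Real.exp_pos t).le

lemma hasDerivAt_Ei {y : ℝ} (hy : y < 0) : HasDerivAt Ei (Real.exp y / y) y := by
  have hG : HasDerivAt (fun z => ∫ t in (y - 1)..z, Real.exp t / t)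
      (Real.exp y / y) y := by
    refine intervalIntegral.integral_hasDerivAt_right ?_ ?_ ?_
    · rw [intervalIntegrable_iff_integrableOn_Ioc_of_le (by linarith)]
      exact (Ei_integrableOn hy).mono_set Set.Ioc_subset_Iic_self
    · exact ⟨Set.univ, Filter.univ_mem,
        ((Real.measurable_exp.div measurable_id).aestronglyMeasurable).restrict⟩
    · exact (Real.continuous_exp.continuousAt).div continuousAt_id (ne_of_lt hy)
  have heq : Ei =ᶠ[nhds y]
      (fun z => Ei (y - 1) + ∫ t in (y - 1)..z, Real.exp t / t) := by
    filter_upwards [Ioo_mem_nhds (show y - 1 < y by linarith) hy] with z hz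
    have h1 : IntegrableOn (fun t => Real.exp t / t) (Set.Iic (y - 1)) :=
      Ei_integrableOn (by linarith)
    have h2 : IntegrableOn (fun t => Real.exp t / t) (Set.Iic z) :=
      Ei_integrableOn hz.2
    have := intervalIntegral.integral_Iic_sub_Iic h1 h2
    simp only [Ei]
    linarith [this]
  exact (HasDerivAt.const_add (Ei (y - 1)) hG).congr_of_eventuallyEq heq

lemma Ei_tendsto_atBot : Tendsto Ei atBot (nhds 0) := by
  apply squeeze_zero_norm' (a := fun y => Real.exp y)
  · filter_upwards [eventually_le_atBot (-1 : ℝ)] with y hy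
    have hy0 : y < 0 := by linarith
    have h1 : ‖Ei y‖ ≤ ∫ t in Set.Iic y, ‖Real.exp t / t‖ :=
      norm_integral_le_integral_norm _
    have h2 : ∫ t in Set.Iic y, ‖Real.exp t / t‖ ≤ ∫ t in Set.Iic y, Real.exp t := by
      apply setIntegral_mono_on (Ei_integrableOn hy0).norm (integrableOn_exp_Iic y)
        measurableSet_Iic
      intro t ht
      have ht0 : t ≤ -1 := le_trans ht hy
      rw [norm_div, Real.norm_eq_abs, Real.norm_eq_abs, abs_of_pos (Real.exp_pos t),
        abs_of_neg (by linarith : t < 0)]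
      rw [div_le_iff₀ (by linarith)]
      nlinarith [Real.exp_pos t, (Real.exp_pos t).le]
    calc ‖Ei y‖ ≤ ∫ t in Set.Iic y, Real.exp t := le_trans h1 h2
      _ = Real.exp y := integral_exp_Iic y
  · exact Real.tendsto_exp_atBot

lemma log_mul_exp_integrableOn {c : ℝ} (hc : 0 < c) :
    IntegrableOn (fun x => Real.log (1 + c * x) * Real.exp (-x)) (Set.Ioi 0) := by
  have hmaj : IntegrableOn (fun x : ℝ => c * (Real.exp (-x) * x ^ ((2:ℝ) - 1)))
      (Set.Ioi 0) := (Real.GammaIntegral_convergent (by norm_num)).const_mul c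
  have hmeas : AEStronglyMeasurable (fun x => Real.log (1 + c * x) * Real.exp (-x))
      (volume.restrict (Set.Ioi 0)) := by
    apply Measurable.aestronglyMeasurable
    exact (Real.measurable_log.comp (measurable_const.add (measurable_id.const_mul c))).mul
      (Real.measurable_exp.comp measurable_id.neg)
  refine Integrable.mono hmaj hmeas ?_
  filter_upwards [ae_restrict_mem measurableSet_Ioi] with x hx
  have hx0 : (0:ℝ) < x := hx
  have h1 : (0:ℝ) < 1 + c * x := by positivity
  have hlog : Real.log (1 + c * x) ≤ c * x := by
    have := Real.log_le_sub_one_of_pos h1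
    linarith
  have hlognn : 0 ≤ Real.log (1 + c * x) := Real.log_nonneg (by nlinarith)
  have hrp : x ^ ((2:ℝ) - 1) = x := by
    norm_num
  rw [Real.norm_eq_abs, Real.norm_eq_abs,
    abs_of_nonneg (by nlinarith [Real.exp_pos (-x)] : 0 ≤ Real.log (1 + c * x) * Real.exp (-x)),
    abs_of_nonneg (by positivity), hrp]
  calc Real.log (1 + c * x) * Real.exp (-x) ≤ (c * x) * Real.exp (-x) :=
        mul_le_mul_of_nonneg_right hlog (Real.exp_pos (-x)).le
    _ = c * (Real.exp (-x) * x) := by ring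

lemma key_integral {c : ℝ} (hc : 0 < c) :
    ∫ x in Set.Ioi (0:ℝ), Real.log (1 + c * x) * Real.exp (-x)
      = -(Real.exp (1/c) * Ei (-(1/c))) := by
  set F : ℝ → ℝ := fun x =>
    -(Real.exp (-x) * Real.log (1 + c * x)) + Real.exp (1/c) * Ei (-(x + 1/c)) with hF
  have hderiv : ∀ x ∈ Set.Ici (0:ℝ),
      HasDerivAt F (Real.log (1 + c * x) * Real.exp (-x)) x := by
    intro x hx
    have hx0 : (0:ℝ) ≤ x := hx
    have h1 : (0:ℝ) < 1 + c * x := by positivity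
    have h2 : (0:ℝ) < x + 1/c := by positivity
    have hexp : HasDerivAt (fun x : ℝ => Real.exp (-x)) (-Real.exp (-x)) x := by
      have h := (Real.hasDerivAt_exp (-x)).comp x ((hasDerivAt_id x).neg)
      simp only [id, mul_neg, mul_one] at h
      exact h
    have hlog : HasDerivAt (fun x : ℝ => Real.log (1 + c * x)) (c / (1 + c * x)) x := by
      have : HasDerivAt (fun x : ℝ => 1 + c * x) c x := by
        simpa using ((hasDerivAt_id x).const_mul c).const_add 1
      exact this.log h1.ne'
    have hEi : HasDerivAt (fun x : ℝ => Ei (-(x + 1/c)))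
        (Real.exp (-(x + 1/c)) / (-(x + 1/c)) * (-1)) x := by
      have hneg : -(x + 1/c) < 0 := by linarith
      have hin : HasDerivAt (fun x : ℝ => -(x + 1/c)) (-1) x := by
        exact ((hasDerivAt_id x).add_const (1/c)).neg
      exact (hasDerivAt_Ei hneg).comp x hin
    have hsum := ((hexp.mul hlog).neg).add
      ((hEi).const_mul (Real.exp (1/c)))
    refine hsum.congr_deriv ?_
    have e1 : Real.exp (1/c) * Real.exp (-(x + 1/c)) = Real.exp (-x) := by
      rw [← Real.exp_add]; ring_nf
    have e2 : Real.exp (1/c) * (Real.exp (-(x + 1/c)) / (-(x + 1/c)) * (-1))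
        = Real.exp (-x) * (c / (1 + c * x)) := by
      calc Real.exp (1/c) * (Real.exp (-(x + 1/c)) / (-(x + 1/c)) * (-1))
          = (Real.exp (1/c) * Real.exp (-(x + 1/c))) * (-1 / (-(x + 1/c))) := by ring
        _ = Real.exp (-x) * (1 / (x + 1/c)) := by
            rw [e1, neg_div_neg_eq]
        _ = Real.exp (-x) * (c / (1 + c * x)) := by
            congr 1
            rw [div_eq_div_iff h2.ne' h1.ne']
            field_simp
            ring
    rw [e2]
    ring
  have htend : Tendsto F atTop (nhds 0) := by
    have t1 : Tendsto (fun x : ℝ => -(Real.exp (-x) * Real.log (1 + c * x))) atTop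
        (nhds 0) := by
      apply squeeze_zero_norm' (a := fun x => c * (x ^ (1:ℕ) * Real.exp (-x)))
      · filter_upwards [eventually_ge_atTop (0:ℝ)] with x hx
        have h1 : (0:ℝ) < 1 + c * x := by positivity
        have hlog : Real.log (1 + c * x) ≤ c * x := by
          have := Real.log_le_sub_one_of_pos h1
          linarith
        have hlognn : 0 ≤ Real.log (1 + c * x) := Real.log_nonneg (by nlinarith)
        rw [norm_neg, Real.norm_eq_abs, abs_of_nonneg (by positivity)]
        calc Real.exp (-x) * Real.log (1 + c * x) ≤ Real.exp (-x) * (c * x) :=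
              mul_le_mul_of_nonneg_left hlog (Real.exp_pos (-x)).le
          _ = c * (x ^ (1:ℕ) * Real.exp (-x)) := by ring
      · have := (Real.tendsto_pow_mul_exp_neg_atTop_nhds_zero 1).const_mul c
        simpa using this
    have t2 : Tendsto (fun x : ℝ => Real.exp (1/c) * Ei (-(x + 1/c))) atTop
        (nhds 0) := by
      have hin : Tendsto (fun x : ℝ => -(x + 1/c)) atTop atBot :=
        tendsto_neg_atTop_atBot.comp (tendsto_atTop_add_const_right _ (1/c) tendsto_id)
      have := (Ei_tendsto_atBot.comp hin).const_mul (Real.exp (1/c))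
      simpa using this
    have h := t1.add t2
    simp only [add_zero] at h
    exact h
  have := integral_Ioi_of_hasDerivAt_of_tendsto' hderiv (log_mul_exp_integrableOn hc) htend
  rw [this, hF]
  simp

/-- For `X ~ Exp(1)` and `a > b > 0`:
`E[log₂(1 + aX/(bX+1))] = E[log₂(1+(a+b)X)] − E[log₂(1+bX)]
  = −(1/ln 2)(e^{1/(a+b)} Ei(−1/(a+b)) − e^{1/b} Ei(−1/b))`. -/
theorem stmt_6 (a b : ℝ) (hb : 0 < b) (hab : b < a) :
    (∫ x in Set.Ioi (0 : ℝ), Real.logb 2 (1 + a * x / (b * x + 1)) * Real.exp (-x))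
      = (∫ x in Set.Ioi (0 : ℝ), Real.logb 2 (1 + (a + b) * x) * Real.exp (-x))
        - (∫ x in Set.Ioi (0 : ℝ), Real.logb 2 (1 + b * x) * Real.exp (-x))
    ∧ (∫ x in Set.Ioi (0 : ℝ), Real.logb 2 (1 + a * x / (b * x + 1)) * Real.exp (-x))
      = -(1 / Real.log 2) *
          (Real.exp (1 / (a + b)) * Ei (-(1 / (a + b)))
            - Real.exp (1 / b) * Ei (-(1 / b))) := by
  have hab0 : (0:ℝ) < a + b := by linarith
  have hlogb : ∀ (u x : ℝ), Real.logb 2 u * Real.exp (-x)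
      = (Real.log 2)⁻¹ * (Real.log u * Real.exp (-x)) := by
    intro u x
    rw [Real.logb]
    ring
  -- integrability of the logb integrands
  have I : ∀ (c : ℝ), 0 < c → IntegrableOn
      (fun x => Real.logb 2 (1 + c * x) * Real.exp (-x)) (Set.Ioi 0) := by
    intro c hc
    have := ((log_mul_exp_integrableOn hc).const_mul (Real.log 2)⁻¹)
    exact this.congr (ae_of_all _ (fun x => (hlogb _ _).symm))
  -- values of the logb integrals
  have V : ∀ (c : ℝ), 0 < c →
      (∫ x in Set.Ioi (0:ℝ), Real.logb 2 (1 + c * x) * Real.exp (-x))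
        = (Real.log 2)⁻¹ * -(Real.exp (1/c) * Ei (-(1/c))) := by
    intro c hc
    calc (∫ x in Set.Ioi (0:ℝ), Real.logb 2 (1 + c * x) * Real.exp (-x))
        = ∫ x in Set.Ioi (0:ℝ), (Real.log 2)⁻¹ * (Real.log (1 + c * x) * Real.exp (-x)) := by
          simp_rw [hlogb]
      _ = (Real.log 2)⁻¹ * ∫ x in Set.Ioi (0:ℝ), Real.log (1 + c * x) * Real.exp (-x) :=
          integral_const_mul _ _
      _ = (Real.log 2)⁻¹ * -(Real.exp (1/c) * Ei (-(1/c))) := by rw [key_integral hc]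
  -- first conjunct
  have hsplit : (∫ x in Set.Ioi (0 : ℝ), Real.logb 2 (1 + a * x / (b * x + 1)) * Real.exp (-x))
      = (∫ x in Set.Ioi (0 : ℝ), Real.logb 2 (1 + (a + b) * x) * Real.exp (-x))
        - (∫ x in Set.Ioi (0 : ℝ), Real.logb 2 (1 + b * x) * Real.exp (-x)) := by
    have hcongr : ∀ x ∈ Set.Ioi (0:ℝ),
        Real.logb 2 (1 + a * x / (b * x + 1)) * Real.exp (-x)
          = Real.logb 2 (1 + (a + b) * x) * Real.exp (-x)
            - Real.logb 2 (1 + b * x) * Real.exp (-x) := by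
      intro x hx
      have hx0 : (0:ℝ) < x := hx
      have hbx : (0:ℝ) < b * x + 1 := by positivity
      have h1 : (0:ℝ) < 1 + (a + b) * x := by nlinarith
      have h2 : (0:ℝ) < 1 + b * x := by positivity
      have heq : 1 + a * x / (b * x + 1) = (1 + (a + b) * x) / (1 + b * x) := by
        field_simp
        ring
      rw [heq, Real.logb_div h1.ne' h2.ne']
      ring
    rw [setIntegral_congr_fun measurableSet_Ioi hcongr]
    exact integral_sub (I (a + b) hab0) (I b hb)
  refine ⟨hsplit, ?_⟩
  rw [hsplit, V (a + b) hab0, V b hb]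
  have h2 : (1:ℝ) < 2 := one_lt_two
  field_simp
  ring
end

section
/- Let a > 0 and let X ~ Exp(1). Then as a → ∞, E[log₂(1 + aX)] = log₂ a − C/ln 2 + o(1), where C is the Euler–Mascheroni constant. -/
/-!
Since `1 + a x = a (a⁻¹ + x)`, the expectation `E[ln(1 + aX)]` equals
`ln a + ∫ ln(a⁻¹ + x) e^{-x} dx`. As `a → ∞` the last integral tends, by dominated convergence
with dominant `(|ln x| + 1 + x) e^{-x}`, to `∫ ln x e^{-x} dx = Γ'(1) = -γ`.
Dividing by `ln 2` gives the claim.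
-/

open MeasureTheory Filter Topology Real Set

lemma integrableOn_rpow_mul_exp_neg {s : ℝ} (hs : -1 < s) :
    IntegrableOn (fun x : ℝ => x ^ s * exp (-x)) (Ioi 0) := by
  simpa [mul_comm] using GammaIntegral_convergent (s := s + 1) (by linarith)

lemma abs_log_le_two_mul_rpow_neg_half_add {t : ℝ} (ht : 0 < t) :
    |log t| ≤ 2 * t ^ (-(1 / 2 : ℝ)) + t := by
  have h_inv : -log t ≤ 2 * t ^ (-(1 / 2 : ℝ)) := by
    have := log_le_rpow_div (inv_pos.2 ht).le (one_half_pos (α := ℝ))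
    rwa [log_inv, inv_rpow ht.le, ← rpow_neg ht.le, div_eq_mul_inv, inv_div, div_one,
      mul_comm] at this
  have h_log : log t ≤ t := (log_le_sub_one_of_pos ht).trans (by linarith)
  have : 0 ≤ t ^ (-(1 / 2 : ℝ)) := rpow_nonneg ht.le _
  exact abs_le.2 ⟨by linarith, by linarith⟩

lemma integrableOn_exp_neg : IntegrableOn (fun x : ℝ => exp (-x)) (Ioi 0) := by
  simpa using integrableOn_rpow_mul_exp_neg (s := 0) (by norm_num)

lemma integrableOn_abs_log_mul_exp_neg :
    IntegrableOn (fun t : ℝ => |log t| * exp (-t)) (Ioi 0) := by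
  have h_dom : IntegrableOn (fun t : ℝ => (2 * t ^ (-(1 / 2 : ℝ)) + t) * exp (-t)) (Ioi 0) := by
    have h1 := (integrableOn_rpow_mul_exp_neg (s := -(1 / 2)) (by norm_num)).const_mul 2
    have h2 := integrableOn_rpow_mul_exp_neg (s := 1) (by norm_num)
    simp only [rpow_one] at h2
    refine IntegrableOn.congr_fun (h1.add h2) (fun t _ => ?_) measurableSet_Ioi
    simp only [Pi.add_apply]
    ring
  refine h_dom.mono' (by fun_prop) ?_
  filter_upwards [ae_restrict_mem measurableSet_Ioi] with t ht
  rw [norm_mul, Real.norm_eq_abs, abs_abs, Real.norm_of_nonneg (exp_pos _).le]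
  exact mul_le_mul_of_nonneg_right (abs_log_le_two_mul_rpow_neg_half_add ht) (exp_pos _).le

lemma integral_log_mul_exp_neg :
    ∫ t in Ioi (0 : ℝ), log t * exp (-t) = -eulerMascheroniConstant := by
  have h_integral : HasDerivAt Complex.GammaIntegral
      ((∫ t in Ioi (0 : ℝ), log t * exp (-t) : ℝ) : ℂ) 1 := by
    convert Complex.hasDerivAt_GammaIntegral (s := 1) (by norm_num) using 1
    rw [← integral_complex_ofReal]
    refine setIntegral_congr_fun measurableSet_Ioi fun t _ => ?_
    simp
  have h_Gamma : HasDerivAt Complex.Gamma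
      ((∫ t in Ioi (0 : ℝ), log t * exp (-t) : ℝ) : ℂ) 1 := by
    refine h_integral.congr_of_eventuallyEq ?_
    filter_upwards [(Complex.continuous_re.isOpen_preimage _ isOpen_Ioi).mem_nhds
      (by norm_num : (1 : ℂ).re ∈ Ioi 0)] with s hs
    exact Complex.Gamma_eq_integral hs
  exact_mod_cast h_Gamma.unique Complex.hasDerivAt_Gamma_one

lemma abs_log_add_le {c x : ℝ} (hc : 0 ≤ c) (hx : 0 < x) :
    |log (c + x)| ≤ |log x| + (c + x) := by
  have h_lower : log x ≤ log (c + x) := log_le_log hx (by linarith)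
  have h_upper : log (c + x) ≤ c + x - 1 := log_le_sub_one_of_pos (by linarith)
  exact abs_le.2 ⟨by linarith [neg_abs_le (log x)], by linarith [abs_nonneg (log x)]⟩

lemma integrableOn_abs_log_add_add_mul_exp_neg (c : ℝ) :
    IntegrableOn (fun x : ℝ => (|log x| + (c + x)) * exp (-x)) (Ioi 0) := by
  have h_id := integrableOn_rpow_mul_exp_neg (s := 1) (by norm_num)
  simp only [rpow_one] at h_id
  refine IntegrableOn.congr_fun
    ((integrableOn_abs_log_mul_exp_neg.add (integrableOn_exp_neg.const_mul c)).add h_id)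
    (fun x _ => ?_) measurableSet_Ioi
  simp only [Pi.add_apply]
  ring

lemma norm_log_add_mul_exp_neg_le {c c' x : ℝ} (hc : 0 ≤ c) (hcc' : c ≤ c') (hx : 0 < x) :
    ‖log (c + x) * exp (-x)‖ ≤ (|log x| + (c' + x)) * exp (-x) := by
  rw [norm_mul, Real.norm_eq_abs, Real.norm_of_nonneg (exp_pos _).le]
  gcongr
  exact (abs_log_add_le hc hx).trans (by linarith)

lemma integrableOn_log_add_mul_exp_neg {c : ℝ} (hc : 0 ≤ c) :
    IntegrableOn (fun x : ℝ => log (c + x) * exp (-x)) (Ioi 0) := by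
  refine (integrableOn_abs_log_add_add_mul_exp_neg c).mono' (by fun_prop) ?_
  filter_upwards [ae_restrict_mem measurableSet_Ioi] with x hx
  exact norm_log_add_mul_exp_neg_le hc le_rfl hx

lemma tendsto_integral_log_add_mul_exp_neg :
    Tendsto (fun c : ℝ => ∫ x in Ioi 0, log (c + x) * exp (-x)) (𝓝[>] 0)
      (𝓝 (-eulerMascheroniConstant)) := by
  rw [← integral_log_mul_exp_neg]
  refine tendsto_integral_filter_of_dominated_convergence _
    (Eventually.of_forall fun c => by fun_prop) ?_ (integrableOn_abs_log_add_add_mul_exp_neg 1) ?_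
  · filter_upwards [Ioo_mem_nhdsGT (zero_lt_one' ℝ)] with c hc
    filter_upwards [ae_restrict_mem measurableSet_Ioi] with x hx
    exact norm_log_add_mul_exp_neg_le hc.1.le hc.2.le hx
  · filter_upwards [ae_restrict_mem measurableSet_Ioi] with x (hx : 0 < x)
    have h_add : Tendsto (fun c : ℝ => c + x) (𝓝[>] 0) (𝓝 x) := by
      simpa using ((continuous_add_const x).tendsto 0).mono_left nhdsWithin_le_nhds
    exact ((continuousAt_log hx.ne').tendsto.comp h_add).mul_const _

lemma integral_log_one_add_mul_mul_exp_neg {a : ℝ} (ha : 0 < a) :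
    ∫ x in Ioi 0, log (1 + a * x) * exp (-x) = log a + ∫ x in Ioi 0, log (a⁻¹ + x) * exp (-x) := by
  have h_split : ∀ x ∈ Ioi (0 : ℝ),
      log (1 + a * x) * exp (-x) = log a * exp (-x) + log (a⁻¹ + x) * exp (-x) := by
    intro x (hx : 0 < x)
    rw [show 1 + a * x = a * (a⁻¹ + x) by field_simp, log_mul ha.ne' (by positivity), add_mul]
  rw [setIntegral_congr_fun measurableSet_Ioi h_split,
    integral_add (integrableOn_exp_neg.const_mul _)
      (integrableOn_log_add_mul_exp_neg (inv_pos.2 ha).le),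
    integral_const_mul, integral_exp_neg_Ioi_zero, mul_one]

/-- As `a → ∞`, `E[log₂(1 + aX)] = log₂ a − C/ln 2 + o(1)` for `X ~ Exp(1)`,
where `C` is the Euler–Mascheroni constant. -/
theorem stmt_7 :
    Tendsto
      (fun a : ℝ =>
        (∫ x in Set.Ioi (0 : ℝ), Real.logb 2 (1 + a * x) * Real.exp (-x))
          - (Real.logb 2 a - Real.eulerMascheroniConstant / Real.log 2))
      atTop (𝓝 0) := by
  have h_lim : Tendsto (fun a : ℝ => ∫ x in Ioi 0, log (a⁻¹ + x) * exp (-x)) atTop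
      (𝓝 (-eulerMascheroniConstant)) :=
    tendsto_integral_log_add_mul_exp_neg.comp tendsto_inv_atTop_nhdsGT_zero
  have h_eq : ∀ᶠ a : ℝ in atTop,
      ((∫ x in Ioi 0, log (a⁻¹ + x) * exp (-x)) + eulerMascheroniConstant) / log 2
        = (∫ x in Ioi 0, logb 2 (1 + a * x) * exp (-x))
          - (logb 2 a - eulerMascheroniConstant / log 2) := by
    filter_upwards [eventually_gt_atTop 0] with a ha
    simp_rw [logb, div_mul_eq_mul_div, integral_div, integral_log_one_add_mul_mul_exp_neg ha]
    ring
  simpa using ((h_lim.add_const eulerMascheroniConstant).div_const (log 2)).congr' h_eq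
end

section
/- Suppose F_λ is a CDF with F_λ(x) ~ x^{MN} as x → 0⁺ (i.e., lim_{x→0⁺} F_λ(x)/x^{MN} = 1), and let ϱ_m, ϱ_{m'} > 0. Then the function P(p) = F_λ(Mϱ_m/p) + F_λ(Mϱ_{m'}/p) − F_λ(Mϱ_m/p)F_λ(Mϱ_{m'}/p) satisfies lim_{p→∞} P(p)·(p/M)^{MN} = ϱ_m^{MN} + ϱ_{m'}^{MN}; hence its diversity order is MN. -/
open Filter Topology

/-!
Since `F x ~ x^k` at `0⁺` with `k = MN`, each term `F (c / p)` behaves like `(c / p)^k`, so after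
scaling by `(p / M)^k` the two single terms converge to `ϱ_m^k` and `ϱ_{m'}^k`, while the product
term carries an extra factor `F (c / p) → 0`. Taking `logb` of `P p ≈ L · p^{-k}` with `L ≠ 0`
then gives `-logb P / logb p = k - logb (P p · p^k) / logb p → k`.
-/

lemma tendsto_const_div_atTop_nhdsGT_zero {c : ℝ} (hc : 0 < c) :
    Tendsto (fun p : ℝ => c / p) atTop (𝓝[>] 0) :=
  tendsto_nhdsWithin_iff.2 ⟨tendsto_id.const_div_atTop c,
    (eventually_gt_atTop 0).mono fun _ hp => div_pos hc hp⟩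

lemma Filter.Tendsto.add_sub_mul_mul {α R : Type*} [CommRing R] [TopologicalSpace R]
    [IsTopologicalRing R] {l : Filter α} {A B s : α → R} {a b : R}
    (hA : Tendsto (fun x => A x * s x) l (𝓝 a)) (hB : Tendsto (fun x => B x * s x) l (𝓝 b))
    (hB0 : Tendsto B l (𝓝 0)) :
    Tendsto (fun x => (A x + B x - A x * B x) * s x) l (𝓝 (a + b)) := by
  have h := (hA.add hB).sub (hA.mul hB0)
  rw [mul_zero, sub_zero] at h
  exact h.congr fun x => by ring

section PowerAsymptotics

variable {F : ℝ → ℝ} {k : ℕ}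

lemma tendsto_nhdsGT_zero_of_tendsto_div_pow (hk : k ≠ 0)
    (hF : Tendsto (fun x => F x / x ^ k) (𝓝[>] 0) (𝓝 1)) :
    Tendsto F (𝓝[>] 0) (𝓝 0) := by
  have hpow : Tendsto (fun x : ℝ => x ^ k) (𝓝[>] 0) (𝓝 0) := by
    simpa [zero_pow hk] using ((continuous_pow k).tendsto (0 : ℝ)).mono_left nhdsWithin_le_nhds
  have hprod := hF.mul hpow
  rw [one_mul] at hprod
  refine hprod.congr' ?_
  filter_upwards [self_mem_nhdsWithin] with x hx
  exact div_mul_cancel₀ _ (pow_ne_zero _ (ne_of_gt hx))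

lemma tendsto_comp_const_div_mul_pow (hF : Tendsto (fun x => F x / x ^ k) (𝓝[>] 0) (𝓝 1))
    {c : ℝ} (hc : 0 < c) (a : ℝ) :
    Tendsto (fun p => F (c / p) * (p / a) ^ k) atTop (𝓝 ((c / a) ^ k)) := by
  have h := (hF.comp (tendsto_const_div_atTop_nhdsGT_zero hc)).mul_const ((c / a) ^ k)
  rw [one_mul] at h
  refine h.congr' ?_
  filter_upwards [eventually_gt_atTop 0] with p hp
  rw [Function.comp_apply, div_mul_eq_mul_div, mul_div_assoc, ← div_pow,
    div_div_div_cancel_left' _ _ hc.ne']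

lemma tendsto_neg_logb_div_logb_of_tendsto_mul_pow {b L : ℝ} (hb : 1 < b) (hL : L ≠ 0)
    (hF : Tendsto (fun p => F p * p ^ k) atTop (𝓝 L)) :
    Tendsto (fun p => -(Real.logb b (F p) / Real.logb b p)) atTop (𝓝 k) := by
  have hrem : Tendsto (fun p => Real.logb b (F p * p ^ k) / Real.logb b p) atTop (𝓝 0) :=
    ((Real.continuousAt_logb hL).tendsto.comp hF).div_atTop (Real.tendsto_logb_atTop hb)
  have h := hrem.neg.add_const (k : ℝ)
  rw [neg_zero, zero_add] at h
  refine h.congr' ?_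
  filter_upwards [hF.eventually_ne hL, eventually_gt_atTop 1] with p hFp hp
  have hlogp : Real.logb b p ≠ 0 := (Real.logb_pos hb hp).ne'
  rw [Real.logb_mul (left_ne_zero_of_mul hFp) (pow_ne_zero _ (by linarith)), Real.logb_pow]
  field_simp
  ring

end PowerAsymptotics

theorem stmt_10_general (M N : ℕ) (hM : 0 < M) (hN : 0 < N)
    (F : ℝ → ℝ)
    (hF : Tendsto (fun x : ℝ => F x / x ^ (M * N)) (nhdsWithin 0 (Set.Ioi 0)) (𝓝 1))
    (ϱm ϱm' : ℝ) (hϱm : 0 < ϱm) (hϱm' : 0 < ϱm') :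
    Tendsto
      (fun p : ℝ =>
        (F ((M : ℝ) * ϱm / p) + F ((M : ℝ) * ϱm' / p)
          - F ((M : ℝ) * ϱm / p) * F ((M : ℝ) * ϱm' / p)) * (p / M) ^ (M * N))
      atTop (𝓝 (ϱm ^ (M * N) + ϱm' ^ (M * N)))
    ∧ Tendsto
        (fun p : ℝ =>
          -(Real.logb 2 (F ((M : ℝ) * ϱm / p) + F ((M : ℝ) * ϱm' / p)
              - F ((M : ℝ) * ϱm / p) * F ((M : ℝ) * ϱm' / p)) / Real.logb 2 p))
        atTop (𝓝 ((M * N : ℕ) : ℝ)) := by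
  have hM0 : (M : ℝ) ≠ 0 := by positivity
  have hA := tendsto_comp_const_div_mul_pow hF (c := M * ϱm) (by positivity) M
  have hB := tendsto_comp_const_div_mul_pow hF (c := M * ϱm') (by positivity) M
  rw [mul_div_cancel_left₀ _ hM0] at hA hB
  have hB0 := (tendsto_nhdsGT_zero_of_tendsto_div_pow (by positivity) hF).comp
    (tendsto_const_div_atTop_nhdsGT_zero (c := M * ϱm') (by positivity))
  have hlim := hA.add_sub_mul_mul hB hB0
  refine ⟨hlim, tendsto_neg_logb_div_logb_of_tendsto_mul_pow one_lt_two (by positivity)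
    ((hlim.mul_const ((M : ℝ) ^ (M * N))).congr fun p => ?_)⟩
  rw [div_pow, mul_assoc, div_mul_cancel₀ _ (pow_ne_zero _ hM0)]

/-- If a CDF `F` satisfies `F(x) ~ x^{MN}` as `x → 0⁺`, then
`P(p) = F(Mϱ_m/p) + F(Mϱ_{m'}/p) − F(Mϱ_m/p)F(Mϱ_{m'}/p)` satisfies
`lim_{p→∞} P(p)(p/M)^{MN} = ϱ_m^{MN} + ϱ_{m'}^{MN}`; hence the diversity order is `MN`. -/
theorem stmt_10 (M N : ℕ) (hM : 0 < M) (hN : 0 < N)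
    (F : ℝ → ℝ) (hmono : Monotone F) (hF01 : ∀ x, 0 ≤ F x ∧ F x ≤ 1)
    (hF : Tendsto (fun x : ℝ => F x / x ^ (M * N)) (nhdsWithin 0 (Set.Ioi 0)) (𝓝 1))
    (ϱm ϱm' : ℝ) (hϱm : 0 < ϱm) (hϱm' : 0 < ϱm') :
    Tendsto
      (fun p : ℝ =>
        (F ((M : ℝ) * ϱm / p) + F ((M : ℝ) * ϱm' / p)
          - F ((M : ℝ) * ϱm / p) * F ((M : ℝ) * ϱm' / p)) * (p / M) ^ (M * N))
      atTop (𝓝 (ϱm ^ (M * N) + ϱm' ^ (M * N)))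
    ∧ Tendsto
        (fun p : ℝ =>
          -(Real.logb 2 (F ((M : ℝ) * ϱm / p) + F ((M : ℝ) * ϱm' / p)
              - F ((M : ℝ) * ϱm / p) * F ((M : ℝ) * ϱm' / p)) / Real.logb 2 p))
        atTop (𝓝 ((M * N : ℕ) : ℝ)) :=
  stmt_10_general M N hM hN F hF ϱm ϱm' hϱm hϱm'
end

section
/- For fixed λ_1,…,λ_M > 0 and L, the FDSAC sensing rate R_s^f(p) with parameters κ ∈ (0,1), μ ∈ (0,1) has high-SNR slope lim_{p→∞} R_s^f(p)/log₂ p = (1−κ)M²/L, which is strictly smaller than the ISAC slope M²/L. -/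
open Filter Topology

lemma aux_ratio (c : ℝ) (hc : 0 < c) :
    Tendsto (fun p : ℝ => Real.logb 2 (1 + c * p) / Real.logb 2 p) atTop (𝓝 1) := by
  have h1 : Tendsto (fun p : ℝ => Real.log (p⁻¹ + c)) atTop (𝓝 (Real.log c)) := by
    have : Tendsto (fun p : ℝ => p⁻¹ + c) atTop (𝓝 (0 + c)) :=
      tendsto_inv_atTop_zero.add tendsto_const_nhds
    rw [zero_add] at this
    exact ((Real.continuousAt_log hc.ne').tendsto).comp this
  have h2 : Tendsto (fun p : ℝ => (Real.log p)⁻¹) atTop (𝓝 0) :=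
    Real.tendsto_log_atTop.inv_tendsto_atTop
  have h3 : Tendsto (fun p : ℝ => 1 + Real.log (p⁻¹ + c) * (Real.log p)⁻¹) atTop
      (𝓝 (1 + Real.log c * 0)) := tendsto_const_nhds.add (h1.mul h2)
  rw [mul_zero, add_zero] at h3
  refine h3.congr' ?_
  filter_upwards [eventually_gt_atTop 1] with p hp
  have hp0 : 0 < p := lt_trans one_pos hp
  have hlogp : 0 < Real.log p := Real.log_pos hp
  have hpc : 0 < p⁻¹ + c := by positivity
  have key : Real.log (1 + c * p) = Real.log p + Real.log (p⁻¹ + c) := by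
    rw [← Real.log_mul hp0.ne' hpc.ne']
    congr 1
    field_simp
  have h2ne : Real.log 2 ≠ 0 := by
    have : (1:ℝ) < 2 := one_lt_two
    exact (Real.log_pos this).ne'
  rw [Real.logb, Real.logb, key]
  field_simp

/-- The high-SNR slope of the FDSAC sensing rate is `(1−κ) M²/L`, strictly smaller
than the ISAC slope `M²/L`. -/
theorem stmt_14 (M : ℕ) (hM : 0 < M) (L : ℝ) (hL : 0 < L)
    (lam : Fin M → ℝ) (hlam : ∀ m, 0 < lam m)
    (κ μ : ℝ) (hκ : κ ∈ Set.Ioo (0 : ℝ) 1) (hμ : μ ∈ Set.Ioo (0 : ℝ) 1) :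
    Tendsto
      (fun p : ℝ =>
        ((M : ℝ) * (1 - κ) / L *
            sSup {v : ℝ | ∃ a : Fin M → ℝ, (∀ m, 0 ≤ a m) ∧ (∑ m, a m) ≤ (1 - μ) * p ∧
              v = ∑ m, Real.logb 2 (1 + L * lam m * a m / (1 - κ))})
          / Real.logb 2 p)
      atTop (𝓝 ((1 - κ) * (M : ℝ) ^ 2 / L))
    ∧ (1 - κ) * (M : ℝ) ^ 2 / L < (M : ℝ) ^ 2 / L := by
  obtain ⟨hκ0, hκ1⟩ := hκ
  obtain ⟨hμ0, hμ1⟩ := hμ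
  have hc : (0:ℝ) < 1 - κ := by linarith
  have hd : (0:ℝ) < 1 - μ := by linarith
  have hMR : (0:ℝ) < (M:ℝ) := by exact_mod_cast hM
  set K : ℝ := (M : ℝ) * (1 - κ) / L with hK
  have hKpos : 0 < K := by positivity
  -- coefficients for lower and upper bounds
  set clo : Fin M → ℝ := fun m => L * lam m * (1 - μ) / ((1 - κ) * M) with hclo
  set cup : Fin M → ℝ := fun m => L * lam m * (1 - μ) / (1 - κ) with hcup
  have hclo_pos : ∀ m, 0 < clo m := fun m => by
    have := hlam m; rw [hclo]; positivity
  have hcup_pos : ∀ m, 0 < cup m := fun m => by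
    have := hlam m; rw [hcup]; positivity
  constructor
  · -- the limit
    have hlo : Tendsto (fun p : ℝ =>
        K * ∑ m, (Real.logb 2 (1 + clo m * p) / Real.logb 2 p)) atTop
        (𝓝 (K * ∑ _m : Fin M, (1:ℝ))) :=
      (tendsto_finset_sum _ (fun m _ => aux_ratio (clo m) (hclo_pos m))).const_mul K
    have hup : Tendsto (fun p : ℝ =>
        K * ∑ m, (Real.logb 2 (1 + cup m * p) / Real.logb 2 p)) atTop
        (𝓝 (K * ∑ _m : Fin M, (1:ℝ))) :=
      (tendsto_finset_sum _ (fun m _ => aux_ratio (cup m) (hcup_pos m))).const_mul K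
    have hsum1 : K * ∑ _m : Fin M, (1:ℝ) = (1 - κ) * (M : ℝ) ^ 2 / L := by
      simp [hK]; field_simp
    rw [hsum1] at hlo hup
    have hboth : ∀ᶠ p : ℝ in atTop,
        K * ∑ m, (Real.logb 2 (1 + clo m * p) / Real.logb 2 p) ≤
          K * sSup {v : ℝ | ∃ a : Fin M → ℝ, (∀ m, 0 ≤ a m) ∧ (∑ m, a m) ≤ (1 - μ) * p ∧
              v = ∑ m, Real.logb 2 (1 + L * lam m * a m / (1 - κ))} / Real.logb 2 p ∧
        K * sSup {v : ℝ | ∃ a : Fin M → ℝ, (∀ m, 0 ≤ a m) ∧ (∑ m, a m) ≤ (1 - μ) * p ∧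
              v = ∑ m, Real.logb 2 (1 + L * lam m * a m / (1 - κ))} / Real.logb 2 p ≤
          K * ∑ m, (Real.logb 2 (1 + cup m * p) / Real.logb 2 p) := by
      filter_upwards [eventually_gt_atTop (1:ℝ)] with p hp
      have hp0 : 0 < p := lt_trans one_pos hp
      have hlogp : 0 < Real.logb 2 p := Real.logb_pos one_lt_two hp
      set S : Set ℝ := {v : ℝ | ∃ a : Fin M → ℝ, (∀ m, 0 ≤ a m) ∧ (∑ m, a m) ≤ (1 - μ) * p ∧
              v = ∑ m, Real.logb 2 (1 + L * lam m * a m / (1 - κ))} with hS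
      have hub : (∑ m, Real.logb 2 (1 + cup m * p)) ∈ upperBounds S := by
        rintro v ⟨a, ha0, hasum, rfl⟩
        refine Finset.sum_le_sum fun m _ => ?_
        have h0m : (0:ℝ) < 1 + L * lam m * a m / (1 - κ) := by
          have := hlam m; have := ha0 m; positivity
        refine Real.logb_le_logb_of_le one_lt_two h0m ?_
        have ham : a m ≤ (1 - μ) * p := le_trans
          (Finset.single_le_sum (fun i _ => ha0 i) (Finset.mem_univ m)) hasum
        have hcc : L * lam m * a m / (1 - κ) ≤ cup m * p := by
          rw [hcup]
          rw [div_mul_eq_mul_div, div_le_div_iff_of_pos_right hc]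
          have h1 : 0 ≤ L * lam m := le_of_lt (mul_pos hL (hlam m))
          calc L * lam m * a m ≤ L * lam m * ((1 - μ) * p) :=
                mul_le_mul_of_nonneg_left ham h1
            _ = L * lam m * (1 - μ) * p := by ring
        linarith
      have hbdd : BddAbove S := ⟨_, hub⟩
      have hmem : (∑ m, Real.logb 2 (1 + clo m * p)) ∈ S := by
        refine ⟨fun _ => (1 - μ) * p / M, fun m => by positivity, ?_, ?_⟩
        · rw [Finset.sum_const, Finset.card_univ, Fintype.card_fin, nsmul_eq_mul]
          exact le_of_eq (by field_simp)
        · refine Finset.sum_congr rfl fun m _ => ?_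
          congr 1
          rw [hclo]
          field_simp
      have hlow : ∑ m, Real.logb 2 (1 + clo m * p) ≤ sSup S := le_csSup hbdd hmem
      have hhigh : sSup S ≤ ∑ m, Real.logb 2 (1 + cup m * p) :=
        csSup_le ⟨_, hmem⟩ hub
      constructor
      · rw [← Finset.sum_div, mul_div_assoc]
        gcongr
      · rw [← Finset.sum_div, mul_div_assoc]
        gcongr
    exact tendsto_of_tendsto_of_tendsto_of_le_of_le' hlo hup
      (hboth.mono fun p h => h.1) (hboth.mono fun p h => h.2)
  · -- strict inequality of slopes
    have hM2 : (0:ℝ) < (M:ℝ)^2 := by positivity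
    have h : (1 - κ) * (M:ℝ)^2 < (M:ℝ)^2 := by nlinarith
    exact div_lt_div_of_pos_right h hL
end

section
/- With λ_1,…,λ_M > 0, L > 0, σ_c² > 1, let R_s^s(p_s) = (M/L)∑_m log₂(1 + λ_m ζ_m^s) with water-filling ∑ ζ_m^s = L p_s against noise 1, and R_s^c(p_s) = (M/L)∑_m log₂(1 + λ_m ζ_m^c/σ_c²) with water-filling ∑ ζ_m^c = L p_s against noise σ_c². Then lim_{p_s→∞} (R_s^s(p_s) − R_s^c(p_s)) = (M²/L) log₂ σ_c² > 0. -/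
/-!
Once `L p` exceeds `M` times every effective noise level `N / λ_m`, every channel is active in
both water-fillings, so the water level is `(L p + N ∑ 1/λ_m)/M` and
`1 + λ_m ζ_m / N = λ_m (L p + N ∑ 1/λ_m)/(M N)`. The per-channel factors `λ_m` cancel in the
gap, which becomes `(M²/L) log₂ (σ_c² (L p + ∑ 1/λ_m)/(L p + σ_c² ∑ 1/λ_m))`, and the ratio
inside tends to `σ_c²`.
-/

open Filter Topology

section WaterFilling

variable {ι : Type*} [Fintype ι]

lemma waterFilling_eq_of_lt {a ζ : ι → ℝ} {w T : ℝ} (ha : ∀ i, 0 ≤ a i)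
    (hζ : ∀ i, ζ i = max 0 (w - a i)) (hsum : ∑ i, ζ i = T)
    (hlarge : ∀ i, a i < T / Fintype.card ι) :
    ∀ i, ζ i = (T + ∑ i, a i) / Fintype.card ι - a i := by
  intro i
  have hcard : (0 : ℝ) < Fintype.card ι := Nat.cast_pos.2 (Fintype.card_pos_iff.2 ⟨i⟩)
  have hT_le : T ≤ Fintype.card ι * max 0 w := by
    calc T = ∑ j, ζ j := hsum.symm
      _ ≤ ∑ _i : ι, max 0 w :=
          Finset.sum_le_sum fun j _ => (hζ j).trans_le (max_le_max le_rfl (by linarith [ha j]))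
      _ = Fintype.card ι * max 0 w := by simp
  have hw : T / Fintype.card ι ≤ w := by
    have hT : 0 < T / Fintype.card ι := (ha i).trans_lt (hlarge i)
    have hmax : T / Fintype.card ι ≤ max 0 w := by rwa [div_le_iff₀' hcard]
    exact (le_max_iff.1 hmax).resolve_left (not_le.2 hT)
  have hactive : ∀ j, ζ j = w - a j := fun j =>
    (hζ j).trans (max_eq_right (by linarith [hlarge j]))
  have hlevel : Fintype.card ι * w - ∑ j, a j = T := by
    rw [← hsum, Finset.sum_congr rfl fun j _ => hactive j, Finset.sum_sub_distrib]
    simp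
  rw [hactive i, ← hlevel]
  field_simp
  ring

lemma sum_logb_one_add_waterFilling [Nonempty ι] {lam ζ : ι → ℝ} (hlam : ∀ i, 0 < lam i)
    {N w T : ℝ} (hN : 0 < N) (hT : 0 < T) (hζ : ∀ i, ζ i = max 0 (w - N / lam i))
    (hsum : ∑ i, ζ i = T) (hlarge : ∀ i, N / lam i < T / Fintype.card ι) :
    ∑ i, Real.logb 2 (1 + lam i * ζ i / N) = ∑ i, Real.logb 2 (lam i)
      + Fintype.card ι * Real.logb 2 ((T + N * ∑ i, 1 / lam i) / (Fintype.card ι * N)) := by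
  have hζ' := waterFilling_eq_of_lt (fun i => (div_pos hN (hlam i)).le) hζ hsum hlarge
  have hcard : (0 : ℝ) < Fintype.card ι := Nat.cast_pos.2 Fintype.card_pos
  have hnoise : ∑ i, N / lam i = N * ∑ i, 1 / lam i := by
    rw [Finset.mul_sum]; simp only [mul_one_div]
  have hW : 0 < (T + N * ∑ i, 1 / lam i) / (Fintype.card ι * N) := by
    have hS : 0 ≤ ∑ i, 1 / lam i := Finset.sum_nonneg fun i _ => (one_div_pos.2 (hlam i)).le
    positivity
  have hfactor : ∀ i, 1 + lam i * ζ i / N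
      = lam i * ((T + N * ∑ i, 1 / lam i) / (Fintype.card ι * N)) := by
    intro i
    rw [hζ' i, hnoise]
    field_simp [(hlam i).ne']
    ring
  simp only [hfactor, Real.logb_mul (hlam _).ne' hW.ne', Finset.sum_add_distrib]
  simp

end WaterFilling

lemma tendsto_add_div_add_of_tendsto_atTop {α : Type*} {l : Filter α} {f : α → ℝ}
    (hf : Tendsto f l atTop) (a b : ℝ) : Tendsto (fun x => (f x + a) / (f x + b)) l (𝓝 1) := by
  have hden : Tendsto (fun x => f x + b) l atTop := tendsto_atTop_add_const_right _ b hf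
  have hlim : Tendsto (fun x => 1 + (a - b) / (f x + b)) l (𝓝 (1 + 0)) :=
    tendsto_const_nhds.add (tendsto_const_nhds.div_atTop hden)
  rw [add_zero] at hlim
  refine hlim.congr' ?_
  filter_upwards [hden.eventually_gt_atTop 0] with x hx
  field_simp
  ring

/-- The uplink SR gap between S-C and C-C SIC orderings converges to
`(M²/L) log₂ σ_c² > 0` as the sensing power grows. -/
theorem stmt_16 (M : ℕ) (hM : 0 < M) (L : ℝ) (hL : 0 < L)
    (lam : Fin M → ℝ) (hlam : ∀ m, 0 < lam m)
    (σc2 : ℝ) (hσc2 : 1 < σc2)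
    (ζs ζc : ℝ → Fin M → ℝ)
    (hζs : ∀ p > (0 : ℝ), ∃ ν > (0 : ℝ),
      (∀ m, ζs p m = max 0 (1 / ν - 1 / lam m)) ∧ ∑ m, ζs p m = L * p)
    (hζc : ∀ p > (0 : ℝ), ∃ ν > (0 : ℝ),
      (∀ m, ζc p m = max 0 (1 / ν - σc2 / lam m)) ∧ ∑ m, ζc p m = L * p) :
    Tendsto
      (fun p : ℝ =>
        (M : ℝ) / L * ∑ m, Real.logb 2 (1 + lam m * ζs p m)
          - (M : ℝ) / L * ∑ m, Real.logb 2 (1 + lam m * ζc p m / σc2))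
      atTop (𝓝 ((M : ℝ) ^ 2 / L * Real.logb 2 σc2))
    ∧ 0 < (M : ℝ) ^ 2 / L * Real.logb 2 σc2 := by
  have hMR : (0 : ℝ) < M := Nat.cast_pos.2 hM
  have : Nonempty (Fin M) := ⟨⟨0, hM⟩⟩
  have hσ : 0 < σc2 := one_pos.trans hσc2
  set S := ∑ m, 1 / lam m
  have hS : 0 ≤ S := Finset.sum_nonneg fun m _ => (one_div_pos.2 (hlam m)).le
  have hLp : Tendsto (fun p => L * p) atTop atTop := tendsto_id.const_mul_atTop hL
  have hgap : (fun p : ℝ =>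
        (M : ℝ) / L * ∑ m, Real.logb 2 (1 + lam m * ζs p m)
          - (M : ℝ) / L * ∑ m, Real.logb 2 (1 + lam m * ζc p m / σc2))
      =ᶠ[atTop] fun p =>
        (M : ℝ) ^ 2 / L * Real.logb 2 (σc2 * ((L * p + S) / (L * p + σc2 * S))) := by
    filter_upwards [eventually_gt_atTop 0, eventually_all.2 fun m =>
      (hLp.atTop_div_const hMR).eventually_gt_atTop (σc2 / lam m)] with p hp hlarge
    have hLp_pos := mul_pos hL hp
    obtain ⟨ν, -, hs, hs_sum⟩ := hζs p hp
    obtain ⟨ν', -, hc, hc_sum⟩ := hζc p hp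
    have hs_large (m : Fin M) : 1 / lam m < L * p / M :=
      (div_le_div_of_nonneg_right hσc2.le (hlam m).le).trans_lt (hlarge m)
    have hRs := sum_logb_one_add_waterFilling hlam one_pos hLp_pos hs hs_sum
      (by simpa using hs_large)
    have hRc := sum_logb_one_add_waterFilling hlam hσ hLp_pos hc hc_sum
      (by simpa using hlarge)
    simp only [div_one, one_mul, mul_one, Fintype.card_fin] at hRs hRc
    have hA : 0 < (L * p + S) / M := by positivity
    have hB : 0 < (L * p + σc2 * S) / (M * σc2) := by positivity
    have hratio : (L * p + S) / M / ((L * p + σc2 * S) / (M * σc2))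
        = σc2 * ((L * p + S) / (L * p + σc2 * S)) := by
      field_simp
    rw [hRs, hRc, ← hratio, Real.logb_div hA.ne' hB.ne']
    ring
  refine ⟨Tendsto.congr' hgap.symm ?_, by have := Real.logb_pos one_lt_two hσc2; positivity⟩
  have hratio := (tendsto_add_div_add_of_tendsto_atTop hLp S (σc2 * S)).const_mul σc2
  rw [mul_one] at hratio
  exact ((Real.continuousAt_logb hσ.ne').tendsto.comp hratio).const_mul _
end

section
/- Let f(p) = −(M/ln 2) e^{1/(pδ)} Ei(−1/(pδ)) and g(p) = −(M/ln 2) e^{σ²/(pδ)} Ei(−σ²/(pδ)) for δ > 0 and σ² > 1. Then lim_{p→∞}(f(p) − g(p)) = M log₂ σ². -/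
/-!
Splitting `eᵗ/t = 1/t + (eᵗ - 1)/t` gives `Ei(-x) = Ei(-1) + log x + ∫_{-1}^{-x} (eᵗ - 1)/t dt`, and
`(eᵗ - 1)/t` extends continuously to `t = 0` (as `dslope exp 0`), so `Ei(-x) - log x` has a limit `C`
as `x → 0⁺`. Since `(eˣ - 1) log x → 0`, also `G(x) = eˣ Ei(-x) - log x → C`, hence
`e^{σx} Ei(-σx) - eˣ Ei(-x) = G(σx) - G(x) + log σ → log σ`; at high SNR `x = 1/(pδ) → 0⁺`.
-/

open MeasureTheory Filter Topology

open Real Set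

lemma integrableOn_exp_div_self_Iic {c : ℝ} (hc : c < 0) :
    IntegrableOn (fun t => exp t / t) (Iic c) := by
  refine ((integrableOn_exp_Iic c).div_const (-c)).mono'
    ((measurable_exp.div measurable_id).aestronglyMeasurable) ?_
  filter_upwards [ae_restrict_mem measurableSet_Iic] with t (ht : t ≤ c)
  rw [norm_div, norm_of_nonneg (exp_pos t).le, norm_of_nonpos (by linarith)]
  gcongr
  linarith

lemma Ei_sub_Ei {a b : ℝ} (ha : a < 0) (hb : b < 0) :
    Ei b - Ei a = ∫ t in a..b, exp t / t :=
  intervalIntegral.integral_Iic_sub_Iic (integrableOn_exp_div_self_Iic ha)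
    (integrableOn_exp_div_self_Iic hb)

lemma exp_div_self_eq_inv_add_dslope {t : ℝ} (ht : t ≠ 0) :
    exp t / t = t⁻¹ + dslope exp 0 t := by
  rw [dslope_of_ne _ ht, slope_def_field, exp_zero]
  field_simp
  ring

lemma continuous_dslope_exp : Continuous (dslope exp 0) :=
  continuousOn_univ.mp <| (continuousOn_dslope Filter.univ_mem).mpr
    ⟨continuous_exp.continuousOn, differentiableAt_exp⟩

lemma Ei_neg_eq {x : ℝ} (hx : 0 < x) :
    Ei (-x) = Ei (-1) + log x + ∫ t in (-1)..(-x), dslope exp 0 t := by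
  have hneg : ∀ t ∈ uIcc (-1) (-x), t < 0 := fun t ht =>
    (le_max_iff.mp ht.2).elim (fun h => by linarith) (fun h => by linarith)
  have hsplit : ∫ t in (-1)..(-x), exp t / t
      = (∫ t in (-1)..(-x), t⁻¹) + ∫ t in (-1)..(-x), dslope exp 0 t := by
    rw [← intervalIntegral.integral_add]
    · exact intervalIntegral.integral_congr fun t ht =>
        exp_div_self_eq_inv_add_dslope (hneg t ht).ne
    · exact intervalIntegral.intervalIntegrable_inv (fun t ht => (hneg t ht).ne)
        continuousOn_id
    · exact continuous_dslope_exp.intervalIntegrable _ _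
  have hlog : ∫ t in (-1)..(-x), t⁻¹ = log x := by
    simpa using integral_one_div_of_neg (a := -1) (b := -x) (by norm_num) (by linarith)
  linarith [Ei_sub_Ei (a := -1) (b := -x) (by norm_num) (by linarith)]

lemma tendsto_Ei_neg_sub_log :
    Tendsto (fun x => Ei (-x) - log x) (𝓝[>] 0)
      (𝓝 (Ei (-1) + ∫ t in (-1)..0, dslope exp 0 t)) := by
  have hprim : Continuous fun x => ∫ t in (-1)..(-x), dslope exp 0 t :=
    (intervalIntegral.continuous_primitive
      (fun a b => continuous_dslope_exp.intervalIntegrable a b) (-1)).comp continuous_neg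
  have h := ((hprim.tendsto 0).mono_left (nhdsWithin_le_nhds (s := Ioi 0))).const_add (Ei (-1))
  rw [neg_zero] at h
  refine h.congr' ?_
  filter_upwards [self_mem_nhdsWithin] with x (hx : 0 < x)
  rw [Ei_neg_eq hx]
  ring

lemma tendsto_exp_mul_Ei_neg_sub_log :
    Tendsto (fun x => exp x * Ei (-x) - log x) (𝓝[>] 0)
      (𝓝 (Ei (-1) + ∫ t in (-1)..0, dslope exp 0 t)) := by
  have hexp : Tendsto exp (𝓝[>] 0) (𝓝 1) := by
    simpa using (continuous_exp.tendsto 0).mono_left nhdsWithin_le_nhds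
  -- `(exp x - 1) log x = dslope exp 0 x * (x log x)`, a continuous function vanishing at `0`
  have hcorr : Tendsto (fun x => dslope exp 0 x * (x * log x)) (𝓝[>] 0) (𝓝 0) := by
    have hcont : Continuous fun x => dslope exp 0 x * (x * log x) :=
      continuous_dslope_exp.mul continuous_mul_log
    simpa using (hcont.tendsto 0).mono_left nhdsWithin_le_nhds
  have h := (hexp.mul tendsto_Ei_neg_sub_log).add hcorr
  rw [one_mul, add_zero] at h
  refine h.congr' ?_
  filter_upwards [self_mem_nhdsWithin] with x (hx : 0 < x)
  rw [dslope_of_ne _ hx.ne', slope_def_field, exp_zero, sub_zero, ← mul_assoc,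
    div_mul_cancel₀ _ hx.ne']
  ring

lemma tendsto_exp_mul_Ei_neg_mul_sub {σ : ℝ} (hσ : 0 < σ) :
    Tendsto (fun x => exp (σ * x) * Ei (-(σ * x)) - exp x * Ei (-x)) (𝓝[>] 0)
      (𝓝 (log σ)) := by
  have hscale : Tendsto (σ * ·) (𝓝[>] (0 : ℝ)) (𝓝[>] 0) :=
    tendsto_comap.mono_left (comap_mulLeft_nhdsGT_zero hσ).ge
  have h := ((tendsto_exp_mul_Ei_neg_sub_log.comp hscale).sub
    tendsto_exp_mul_Ei_neg_sub_log).const_add (log σ)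
  rw [sub_self, add_zero] at h
  refine h.congr' ?_
  filter_upwards [self_mem_nhdsWithin] with x (hx : 0 < x)
  simp only [Function.comp_apply]
  rw [log_mul hσ.ne' hx.ne']
  ring

theorem stmt_17_general (M : ℕ) (δ σ2 : ℝ) (hδ : 0 < δ) (hσ2 : 1 < σ2) :
    Tendsto
      (fun p : ℝ =>
        (-(M / Real.log 2) * Real.exp (1 / (p * δ)) * Ei (-(1 / (p * δ))))
          - (-(M / Real.log 2) * Real.exp (σ2 / (p * δ)) * Ei (-(σ2 / (p * δ)))))
      atTop (𝓝 ((M : ℝ) * Real.logb 2 σ2)) := by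
  have hsnr : Tendsto (fun p : ℝ => 1 / (p * δ)) atTop (𝓝[>] 0) := by
    refine (tendsto_inv_atTop_nhdsGT_zero.comp (tendsto_id.atTop_mul_const hδ)).congr fun p => ?_
    simp
  have h := ((tendsto_exp_mul_Ei_neg_mul_sub (by linarith : 0 < σ2)).comp hsnr).const_mul
    ((M : ℝ) / log 2)
  rw [show (M : ℝ) * logb 2 σ2 = M / log 2 * log σ2 by rw [logb]; ring]
  refine h.congr fun p => ?_
  simp only [Function.comp_apply, mul_one_div]
  ring

/-- The high-SNR gap between the C-C and S-C uplink sum ergodic communication rates: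
`f(p) − g(p) → M log₂ σ²`, where
`f(p) = −(M/ln 2) e^{1/(pδ)} Ei(−1/(pδ))` and
`g(p) = −(M/ln 2) e^{σ²/(pδ)} Ei(−σ²/(pδ))`. -/
theorem stmt_17 (M : ℕ) (hM : 0 < M) (δ σ2 : ℝ) (hδ : 0 < δ) (hσ2 : 1 < σ2) :
    Tendsto
      (fun p : ℝ =>
        (-(M / Real.log 2) * Real.exp (1 / (p * δ)) * Ei (-(1 / (p * δ))))
          - (-(M / Real.log 2) * Real.exp (σ2 / (p * δ)) * Ei (-(σ2 / (p * δ)))))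
      atTop (𝓝 ((M : ℝ) * Real.logb 2 σ2)) :=
  stmt_17_general M δ σ2 hδ hσ2
end
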